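/- Let δ be a circular semi-flower automaton with state set Q, alphabet A, initial-final state q0, and distinguished letter a whose letter map ā is a circular permutation. If the automaton has at least one branch point going in (BPI ≠ ∅), then q0 is a branch point going in. -/
import Mathlib


/-- Extension of the transition function `δ : Q → A → Q` to words (lists of letters):
`δ*(q, ε) = q` and `δ*(q, a·w) = δ*(δ(q,a), w)`. -/
def deltaStar {Q A : Type*} (δ : Q → A → Q) : Q → List A → Q
  | q, [] => q
  | q, a :: w => deltaStar δ (δ q a) w

/-- `δ` (with initial-final state `q0`) is a semi-flower automaton: every state is
accessible and coaccessible, and every cycle passes through `q0` (i.e. for every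
nonempty word `w` labelling a cycle at `q`, some prefix of `w` leads from `q` to `q0`). -/
def IsSFA {Q A : Type*} (δ : Q → A → Q) (q0 : Q) : Prop :=
  (∀ q : Q, ∃ w : List A, deltaStar δ q0 w = q) ∧
  (∀ q : Q, ∃ w : List A, deltaStar δ q w = q0) ∧
  (∀ (q : Q) (w : List A), w ≠ [] → deltaStar δ q w = q →
    ∃ u : List A, u <+: w ∧ deltaStar δ q u = q0)

/-- A map `f : Q → Q` is a circular permutation if it is bijective and for all
`p q : Q` there is `k : ℕ` with `f^[k] p = q`. -/
def IsCircularPerm {Q : Type*} (f : Q → Q) : Prop :=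
  Function.Bijective f ∧ ∀ p q : Q, ∃ k : ℕ, f^[k] p = q

/-- The set of branch points going in (bpis): states that are the target of two
distinct transitions. -/
def BPI {Q A : Type*} (δ : Q → A → Q) : Set Q :=
  {q | ∃ pb₁ pb₂ : Q × A, pb₁ ≠ pb₂ ∧ δ pb₁.1 pb₁.2 = q ∧ δ pb₂.1 pb₂.2 = q}

theorem deltaStar_append' {Q A : Type*} (δ : Q → A → Q) (q : Q) (u v : List A) :
    deltaStar δ q (u ++ v) = deltaStar δ (deltaStar δ q u) v := by
  induction u generalizing q with
  | nil => rfl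
  | cons x xs ih => simp [deltaStar, ih]

theorem deltaStar_replicate' {Q A : Type*} (δ : Q → A → Q) (a : A) (q : Q) (k : ℕ) :
    deltaStar δ q (List.replicate k a) = (fun q => δ q a)^[k] q := by
  induction k generalizing q with
  | zero => rfl
  | succ k ih =>
    rw [List.replicate_succ]
    show deltaStar δ (δ q a) (List.replicate k a) = _
    rw [ih, Function.iterate_succ_apply]

/-- If every point is reachable from `s` by iterating `f` and `f^[d] s = s` with
`0 < d`, then `d` is at least the cardinality of the type. -/
theorem card_le_of_period {Q : Type*} [Fintype Q] (f : Q → Q)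
    (hcirc : ∀ p q : Q, ∃ k : ℕ, f^[k] p = q)
    (s : Q) (d : ℕ) (hd : 0 < d) (hfd : f^[d] s = s) : Fintype.card Q ≤ d := by
  have hmul : ∀ m : ℕ, f^[d * m] s = s := by
    intro m
    induction m with
    | zero => simp
    | succ m ih => rw [Nat.mul_succ, Function.iterate_add_apply, hfd, ih]
  have hsurj : Function.Surjective (fun i : Fin d => f^[(i : ℕ)] s) := by
    intro q
    obtain ⟨k, hk⟩ := hcirc s q
    refine ⟨⟨k % d, Nat.mod_lt _ hd⟩, ?_⟩
    simp only
    conv_rhs => rw [← hk, ← Nat.mod_add_div k d, Function.iterate_add_apply, hmul]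
  calc Fintype.card Q ≤ Fintype.card (Fin d) := Fintype.card_le_of_surjective _ hsurj
    _ = d := Fintype.card_fin d

/-- A circular permutation on a finite type satisfies `f^[card Q] s = s`. -/
theorem iterate_card_fixed {Q : Type*} [Fintype Q] [Nonempty Q] (f : Q → Q)
    (hinj : Function.Injective f)
    (hcirc : ∀ p q : Q, ∃ k : ℕ, f^[k] p = q) (s : Q) :
    f^[Fintype.card Q] s = s := by
  set n := Fintype.card Q with hn
  have hpos : 0 < n := Fintype.card_pos
  -- pigeonhole on i ↦ f^[i] s for i : Fin (n+1)
  have hlt : Fintype.card Q < Fintype.card (Fin (n + 1)) := by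
    rw [Fintype.card_fin]; omega
  obtain ⟨i, j, hij, hfij⟩ :=
    Fintype.exists_ne_map_eq_of_card_lt (fun i : Fin (n + 1) => f^[(i : ℕ)] s) hlt
  wlog hlt' : (i : ℕ) < (j : ℕ) generalizing i j
  · have hne' : (i : ℕ) ≠ (j : ℕ) := fun h => hij (Fin.ext h)
    exact this j i hij.symm hfij.symm (by omega)
  have hiter : f^[(j : ℕ)] s = f^[(i : ℕ)] (f^[(j : ℕ) - (i : ℕ)] s) := by
    rw [← Function.iterate_add_apply]
    congr 1
    omega
  have hinj' : Function.Injective (f^[(i : ℕ)]) := Function.Injective.iterate hinj _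
  have hper : f^[(j : ℕ) - (i : ℕ)] s = s := by
    apply hinj'
    rw [← hiter, hfij]
  have hd1 : 0 < (j : ℕ) - (i : ℕ) := by omega
  have hd2 : (j : ℕ) - (i : ℕ) ≤ n := by
    have := j.isLt
    omega
  have := card_le_of_period f hcirc s _ hd1 hper
  have heq : (j : ℕ) - (i : ℕ) = n := le_antisymm hd2 this
  rw [← heq]
  exact hper

/-- In a circular semi-flower automaton with at least one bpi, the initial-final
state `q0` is a bpi. -/
theorem csfa_q0_is_bpi {Q A : Type*} [Fintype Q] [Nonempty Q] [Fintype A]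
    (δ : Q → A → Q) (q0 : Q) (hSFA : IsSFA δ q0)
    (a : A) (hca : IsCircularPerm (fun q => δ q a))
    (hbpi : (BPI δ).Nonempty) :
    q0 ∈ BPI δ := by
  set f : Q → Q := fun q => δ q a with hf
  obtain ⟨hbij, hcirc⟩ := hca
  have hinj : Function.Injective f := hbij.1
  set n := Fintype.card Q with hn
  have hpos : 0 < n := Fintype.card_pos
  -- There is a letter b ≠ a.
  obtain ⟨q, ⟨p₁, b₁⟩, ⟨p₂, b₂⟩, hne, h₁, h₂⟩ := hbpi
  have hexb : ∃ b : A, b ≠ a := by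
    by_cases hb₁ : b₁ = a
    · by_cases hb₂ : b₂ = a
      · exfalso
        subst hb₁; subst hb₂
        have : p₁ = p₂ := hinj (by simp only [hf]; rw [h₁, h₂])
        exact hne (by simp [this])
      · exact ⟨b₂, hb₂⟩
    · exact ⟨b₁, hb₁⟩
  obtain ⟨b, hb⟩ := hexb
  -- r is the a-predecessor of q0
  obtain ⟨r, hr⟩ := hbij.2 q0
  -- claim: δ r b = q0
  set s := δ r b with hs
  have hsq0 : s = q0 := by
    by_contra hsq
    -- k < n with f^[k] s = r
    obtain ⟨k₀, hk₀⟩ := hcirc s r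
    have hfix : f^[n] s = s := iterate_card_fixed f hinj hcirc s
    set k := k₀ % n with hk
    have hkn : k < n := Nat.mod_lt _ hpos
    have hkr : f^[k] s = r := by
      have hmul : ∀ m : ℕ, f^[n * m] s = s := by
        intro m
        induction m with
        | zero => simp
        | succ m ih => rw [Nat.mul_succ, Function.iterate_add_apply, hfix, ih]
      have h' : f^[k₀ % n + n * (k₀ / n)] s = r := by
        rw [Nat.add_comm, Nat.div_add_mod]; exact hk₀
      rw [Function.iterate_add_apply, hmul] at h'
      exact h'
    -- the cycle a^k b at s
    set w : List A := List.replicate k a ++ [b] with hw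
    have hcyc : deltaStar δ s w = s := by
      rw [hw, deltaStar_append', deltaStar_replicate', hkr]
      simp [deltaStar, hs]
    have hwne : w ≠ [] := by simp [hw]
    obtain ⟨u, hu, huq0⟩ := hSFA.2.2 s w hwne hcyc
    -- analyze the prefix u
    have hul : u.length ≤ k + 1 := by
      have := hu.length_le
      simpa [hw] using this
    by_cases hcase : u.length ≤ k
    · -- u is a prefix of replicate k a, so u = replicate u.length a
      have hupre : u <+: List.replicate k a := by
        rcases List.prefix_or_prefix_of_prefix hu (List.prefix_append _ _) with h | h
        · exact h
        · have : u = List.replicate k a := by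
            rcases Nat.eq_or_lt_of_le hcase with heq | hlt
            · exact (h.eq_of_length (by simp [heq])).symm
            · exfalso
              have := h.length_le
              simp at this
              omega
          rw [this]
      have hurep : u = List.replicate u.length a := by
        have hmem : ∀ x ∈ u, x = a := fun x hx =>
          List.eq_of_mem_replicate (hupre.subset hx)
        exact List.eq_replicate_length.mpr hmem
      set j := u.length with hj
      have hjq0 : f^[j] s = q0 := by
        rw [← huq0, hurep, deltaStar_replicate']
      have hk1q0 : f^[k + 1] s = q0 := by
        rw [Function.iterate_succ_apply', hkr]
        exact hr
      -- so f^[k+1-j] s = s, a period ≤ n, forcing j = 0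
      have hiter : f^[k + 1] s = f^[j] (f^[k + 1 - j] s) := by
        rw [← Function.iterate_add_apply]
        congr 1
        omega
      have hper : f^[k + 1 - j] s = s := by
        apply Function.Injective.iterate hinj j
        rw [← hiter, hk1q0, hjq0]
      have hd1 : 0 < k + 1 - j := by omega
      have hge := card_le_of_period f hcirc s _ hd1 hper
      have hj0 : j = 0 := by omega
      apply hsq
      have : f^[0] s = q0 := by rw [← hj0]; exact hjq0
      simpa using this
    · -- u = w, so s = q0, contradiction
      have hulen : u.length = k + 1 := by omega
      have huw : u = w := hu.eq_of_length (by simp [hw, hulen])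
      apply hsq
      rw [← hcyc, ← huw, huq0]
  -- conclude: (r, a) and (r, b) are distinct transitions into q0
  exact ⟨(r, a), (r, b), by simp [hb.symm], hr, hsq0 ▸ hs.symm⟩
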